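/- As s → +∞, I_0(s) → √π, I_1(s)/s → √π, I_2(s)/s² → √π, and I_3(s)/s³ → √π. -/

import Mathlib

/-!
Substituting `z = s + u` turns `I_n(s) / sⁿ` into `∫_{-s}^∞ (1 + u/s)ⁿ e^{-u²} du`. The integrand
tends to `e^{-u²}` pointwise, and for `s ≥ 1` it is dominated by `2ⁿ⁻¹ (1 + |u|ⁿ) e^{-u²}`, so by
dominated convergence the quotient tends to the Gaussian integral `√π`.
-/

open MeasureTheory Real Filter

noncomputable def In (n : ℕ) (s : ℝ) : ℝ :=
  ∫ z in Set.Ioi (0 : ℝ), z ^ n * Real.exp (-(z - s) ^ 2)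

open Set Topology

lemma abs_one_add_div_pow_le {s u : ℝ} (hs : 1 ≤ s) (hu : -s < u) (n : ℕ) :
    |1 + u / s| ^ n ≤ 2 ^ (n - 1) * (1 + |u| ^ n) := by
  have hs0 : 0 < s := one_pos.trans_le hs
  have h_lower : -1 < u / s := by rwa [lt_div_iff₀ hs0, neg_one_mul]
  have h_upper : u / s ≤ |u| :=
    (div_le_div_of_nonneg_right (le_abs_self u) hs0.le).trans (div_le_self (abs_nonneg u) hs)
  calc |1 + u / s| ^ n ≤ (1 + |u|) ^ n := by
        gcongr
        exact abs_le.2 ⟨by linarith [abs_nonneg u], by linarith⟩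
    _ ≤ 2 ^ (n - 1) * (1 + |u| ^ n) := by
        simpa using add_pow_le zero_le_one (abs_nonneg u) n

theorem tendsto_setIntegral_Ioi_neg_one_add_div_pow_mul {g : ℝ → ℝ} {n : ℕ} (hg : Integrable g)
    (hg_n : Integrable fun u => |u| ^ n * g u) :
    Tendsto (fun s => ∫ u in Ioi (-s), (1 + u / s) ^ n * g u) atTop (𝓝 (∫ u, g u)) := by
  simp_rw [← integral_indicator measurableSet_Ioi]
  refine tendsto_integral_filter_of_dominated_convergence
    (fun u => 2 ^ (n - 1) * (‖g u‖ + ‖|u| ^ n * g u‖)) (Eventually.of_forall fun s => ?_) ?_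
    ((hg.norm.add hg_n.norm).const_mul _) (ae_of_all _ fun u => ?_)
  · exact ((by fun_prop : Continuous fun u : ℝ => (1 + u / s) ^ n).aestronglyMeasurable.mul
      hg.aestronglyMeasurable).indicator measurableSet_Ioi
  · filter_upwards [eventually_ge_atTop 1] with s hs
    refine ae_of_all _ fun u => ?_
    by_cases hu : u ∈ Ioi (-s)
    · calc ‖(Ioi (-s)).indicator (fun u => (1 + u / s) ^ n * g u) u‖
          = |1 + u / s| ^ n * ‖g u‖ := by
            rw [indicator_of_mem hu, norm_mul, norm_pow, Real.norm_eq_abs]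
        _ ≤ 2 ^ (n - 1) * (1 + |u| ^ n) * ‖g u‖ := by
            gcongr
            exact abs_one_add_div_pow_le hs hu n
        _ = 2 ^ (n - 1) * (‖g u‖ + ‖|u| ^ n * g u‖) := by
            simp only [norm_mul, norm_pow, Real.norm_eq_abs, abs_abs]
            ring
    · rw [indicator_of_notMem hu, norm_zero]
      positivity
  · have h_eq : (fun s => (Ioi (-s)).indicator (fun u => (1 + u / s) ^ n * g u) u)
        =ᶠ[atTop] fun s => (1 + u / s) ^ n * g u := by
      filter_upwards [eventually_gt_atTop (-u)] with s hs
      exact indicator_of_mem (neg_lt.1 hs) _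
    refine Tendsto.congr' h_eq.symm ?_
    simpa using ((tendsto_const_nhds.div_atTop tendsto_id).const_add 1).pow n |>.mul_const (g u)

lemma integrable_abs_pow_mul_exp_neg_sq (n : ℕ) :
    Integrable fun u : ℝ => |u| ^ n * exp (-u ^ 2) := by
  simpa [abs_mul] using (integrable_rpow_mul_exp_neg_mul_sq one_pos
    (by linarith [n.cast_nonneg (α := ℝ)] : (-1 : ℝ) < n)).abs

lemma In_eq_setIntegral_shift (n : ℕ) (s : ℝ) :
    In n s = ∫ u in Ioi (-s), (u + s) ^ n * exp (-u ^ 2) := by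
  have h := (measurePreserving_add_right volume s).setIntegral_preimage_emb
    (measurableEmbedding_addRight s) (fun z => z ^ n * exp (-(z - s) ^ 2)) (Ioi 0)
  rw [preimage_add_const_Ioi, zero_sub] at h
  simp only [add_sub_cancel_right] at h
  exact h.symm

lemma In_div_pow_eq {s : ℝ} (hs : 0 < s) (n : ℕ) :
    In n s / s ^ n = ∫ u in Ioi (-s), (1 + u / s) ^ n * exp (-u ^ 2) := by
  rw [In_eq_setIntegral_shift, ← integral_div]
  refine setIntegral_congr_fun measurableSet_Ioi fun u _ => ?_
  rw [mul_div_right_comm, ← div_pow, add_div, div_self hs.ne', add_comm]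

theorem tendsto_In_div_pow (n : ℕ) :
    Tendsto (fun s => In n s / s ^ n) atTop (𝓝 (√π)) := by
  have h_gauss : ∫ u : ℝ, exp (-u ^ 2) = √π := by simpa using integral_gaussian 1
  have h_int : Integrable fun u : ℝ => exp (-u ^ 2) := by
    simpa using integrable_exp_neg_mul_sq one_pos
  rw [← h_gauss]
  refine (tendsto_setIntegral_Ioi_neg_one_add_div_pow_mul h_int
    (integrable_abs_pow_mul_exp_neg_sq n)).congr' ?_
  filter_upwards [eventually_gt_atTop 0] with s hs
  exact (In_div_pow_eq hs n).symm

theorem In_limits_atTop :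
    Tendsto (fun s => In 0 s) atTop (nhds (Real.sqrt π)) ∧
    Tendsto (fun s => In 1 s / s) atTop (nhds (Real.sqrt π)) ∧
    Tendsto (fun s => In 2 s / s ^ 2) atTop (nhds (Real.sqrt π)) ∧
    Tendsto (fun s => In 3 s / s ^ 3) atTop (nhds (Real.sqrt π)) := by
  refine ⟨?_, ?_, tendsto_In_div_pow 2, tendsto_In_div_pow 3⟩
  · simpa using tendsto_In_div_pow 0
  · simpa using tendsto_In_div_pow 1
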